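/- arXiv:1203.4170 — 3 statements merged into one kernel-verified Lean document; each statement's English description precedes it below -/
import Mathlib

section
/- For all real x ≥ 2, √x (1 - 2/x) ≤ Γ(x + 1/2)/Γ(x) ≤ √x. -/
open Real

lemma gamma_half_step (y : ℝ) (hy : 0 < y) :
    Real.Gamma (y + 1/2) ≤ Real.sqrt y * Real.Gamma y := by
  have hG : 0 < Real.Gamma y := Real.Gamma_pos_of_pos hy
  have h := Real.Gamma_mul_add_mul_le_rpow_Gamma_mul_rpow_Gamma hy
    (by linarith : (0:ℝ) < y + 1) (by norm_num : (0:ℝ) < (1/2:ℝ))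
    (by norm_num : (0:ℝ) < (1/2:ℝ)) (by norm_num)
  have harg : (1/2 : ℝ) * y + (1/2) * (y + 1) = y + 1/2 := by ring
  rw [harg, Real.Gamma_add_one (ne_of_gt hy)] at h
  calc Real.Gamma (y + 1/2) ≤ Real.Gamma y ^ (1/2 : ℝ) * (y * Real.Gamma y) ^ (1/2 : ℝ) := h
    _ = (Real.Gamma y * (y * Real.Gamma y)) ^ (1/2 : ℝ) := by
        rw [← Real.mul_rpow hG.le (by positivity)]
    _ = (y * Real.Gamma y ^ 2) ^ (1/2 : ℝ) := by ring_nf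
    _ = Real.sqrt y * Real.Gamma y := by
        rw [Real.mul_rpow hy.le (by positivity), ← Real.rpow_natCast (Real.Gamma y) 2,
          ← Real.rpow_mul hG.le]
        norm_num [Real.sqrt_eq_rpow]

/-- For `x ≥ 2`, `√x (1 - 2/x) ≤ Γ(x+1/2)/Γ(x) ≤ √x`. -/
theorem gamma_ratio_bounds (x : ℝ) (hx : 2 ≤ x) :
    Real.sqrt x * (1 - 2 / x) ≤ Real.Gamma (x + 1/2) / Real.Gamma x ∧
      Real.Gamma (x + 1/2) / Real.Gamma x ≤ Real.sqrt x := by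
  have hx0 : 0 < x := by linarith
  have hG : 0 < Real.Gamma x := Real.Gamma_pos_of_pos hx0
  constructor
  · -- lower bound
    have hy : 0 < x - 1/2 := by linarith
    have h1 : Real.Gamma x ≤ Real.sqrt (x - 1/2) * Real.Gamma (x - 1/2) := by
      have := gamma_half_step (x - 1/2) hy
      simpa using this
    have hG2 : 0 < Real.Gamma (x - 1/2) := Real.Gamma_pos_of_pos hy
    have h2 : Real.Gamma (x + 1/2) = (x - 1/2) * Real.Gamma (x - 1/2) := by
      have := Real.Gamma_add_one (ne_of_gt hy)
      rw [show x - 1/2 + 1 = x + 1/2 by ring] at this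
      exact this
    have hs : 0 < Real.sqrt (x - 1/2) := Real.sqrt_pos.mpr hy
    have h3 : Real.sqrt (x - 1/2) ≤ Real.Gamma (x + 1/2) / Real.Gamma x := by
      rw [le_div_iff₀ hG, h2]
      calc Real.sqrt (x - 1/2) * Real.Gamma x
          ≤ Real.sqrt (x - 1/2) * (Real.sqrt (x - 1/2) * Real.Gamma (x - 1/2)) := by
            exact mul_le_mul_of_nonneg_left h1 hs.le
        _ = (x - 1/2) * Real.Gamma (x - 1/2) := by
            rw [← mul_assoc, Real.mul_self_sqrt hy.le]
    refine le_trans ?_ h3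
    have hle : 0 ≤ 1 - 2 / x := by
      rw [sub_nonneg, div_le_one hx0]; linarith
    have hsq : (Real.sqrt x * (1 - 2 / x)) ^ 2 ≤ x - 1/2 := by
      rw [mul_pow, Real.sq_sqrt hx0.le]
      have h4 : x * (1 - 2 / x) ^ 2 = x - 4 + 4 / x := by
        field_simp; ring
      rw [h4]
      have : 4 / x ≤ 2 := by rw [div_le_iff₀ hx0]; linarith
      linarith
    nlinarith [hs.le, Real.sq_sqrt hy.le, Real.sqrt_nonneg x,
      sq_nonneg (Real.sqrt (x - 1/2) - Real.sqrt x * (1 - 2/x)),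
      mul_nonneg (Real.sqrt_nonneg x) hle]
  · rw [div_le_iff₀ hG]
    simpa [mul_comm] using gamma_half_step x hx0
end

section
/- Let M be an n×n bidiagonal matrix with diagonal a₁,...,aₙ and off-diagonal b₁,...,b_{n-1}, and let L be the 2n×2n symmetric tridiagonal matrix with zeros on the main diagonal and with a₁, b₁, a₂, b₂, ..., aₙ on the off-diagonal. If λ₁,...,λₙ are the singular values of M, then the eigenvalues of L are exactly ±λᵢ, i = 1,...,n (with multiplicity). -/
/-!
Ordering the indices of `L` as `0, 2, 4, …` followed by `1, 3, 5, …` turns `L` into the block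
matrix `[[0, Mᵀ], [M, 0]]`. For square blocks `B, C` one has
`det [[X, -B], [-C, X]] = det (X² - B C)`, so the characteristic polynomial of `[[0, Mᵀ], [M, 0]]`
is that of `MᵀM` evaluated at `X²`, and `X² - λ² = (X - λ)(X + λ)`.
-/

open Polynomial Matrix

namespace Matrix

variable {n R : Type*} [Fintype n] [DecidableEq n] [CommRing R]

theorem det_fromBlocks_scalar_scalar {r : R} (hr : r ∈ nonZeroDivisors R) (B C : Matrix n n R) :
    (fromBlocks (scalar n r) B C (scalar n r)).det = (scalar n (r ^ 2) - B * C).det := by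
  -- right multiplication by `[[r, 0], [-C, 1]]` clears the lower left block, at the cost of `rⁿ`
  have hclear : fromBlocks (scalar n r) B C (scalar n r) * fromBlocks (scalar n r) 0 (-C) 1 =
      fromBlocks (scalar n (r ^ 2) - B * C) B 0 (scalar n r) := by
    rw [fromBlocks_multiply, ← (scalar_commute r (Commute.all r) C).eq]
    simp [pow_two, sub_eq_add_neg]
  have h := congrArg det hclear
  rw [det_mul, det_fromBlocks_zero₁₂, det_fromBlocks_zero₂₁, det_one, mul_one] at h
  simp only [scalar_apply, det_diagonal, Finset.prod_const, Finset.card_univ] at h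
  exact (mul_cancel_right_mem_nonZeroDivisors (pow_mem hr _)).mp h

theorem charmatrix_map_compRingHom (M : Matrix n n R) (q : R[X]) :
    (charmatrix M).map (compRingHom q) = scalar n q - M.map C := by
  ext i j
  by_cases h : i = j
  · subst h
    simp
  · simp [h]

theorem charpoly_fromBlocks_zero₁₁_zero₂₂ (B C : Matrix n n R) :
    (fromBlocks 0 B C 0).charpoly = (B * C).charpoly.comp (X ^ 2) := by
  rw [charpoly, charmatrix_fromBlocks, charmatrix_zero,
    det_fromBlocks_scalar_scalar (r := (X : R[X])) X_mem_nonzeroDivisors, neg_mul_neg,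
    ← Matrix.map_mul, charpoly, ← coe_compRingHom_apply, RingHom.map_det,
    RingHom.mapMatrix_apply, charmatrix_map_compRingHom]

end Matrix

def finSumFinEquivInterleave (n : ℕ) : Fin n ⊕ Fin n ≃ Fin (2 * n) where
  toFun := Sum.elim (fun k => ⟨2 * k, by omega⟩) (fun k => ⟨2 * k + 1, by omega⟩)
  invFun i := if (i : ℕ) % 2 = 0 then .inl ⟨i / 2, by omega⟩ else .inr ⟨i / 2, by omega⟩
  left_inv := by
    rintro (k | k) <;> simp [Fin.ext_iff]; omega
  right_inv i := by
    by_cases h : (i : ℕ) % 2 = 0 <;> simp [h, Fin.ext_iff] <;> omega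

@[simp]
theorem finSumFinEquivInterleave_inl_val {n : ℕ} (k : Fin n) :
    (finSumFinEquivInterleave n (.inl k) : ℕ) = 2 * k := rfl

@[simp]
theorem finSumFinEquivInterleave_inr_val {n : ℕ} (k : Fin n) :
    (finSumFinEquivInterleave n (.inr k) : ℕ) = 2 * k + 1 := rfl

theorem submatrix_finSumFinEquivInterleave {α : Type*} [Zero α] {n : ℕ} (a b : ℕ → α)
    (M : Matrix (Fin n) (Fin n) α)
    (hM : ∀ i j : Fin n, M i j =
      if (i : ℕ) = j then a i else if (j : ℕ) = (i : ℕ) + 1 then b i else 0)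
    (L : Matrix (Fin (2 * n)) (Fin (2 * n)) α)
    (hL : ∀ i j : Fin (2 * n), L i j =
      if (i : ℕ) + 1 = j ∨ (j : ℕ) + 1 = i then
        (if (min (i : ℕ) (j : ℕ)) % 2 = 0 then a ((min (i : ℕ) (j : ℕ)) / 2)
         else b ((min (i : ℕ) (j : ℕ)) / 2))
      else 0) :
    L.submatrix (finSumFinEquivInterleave n) (finSumFinEquivInterleave n) =
      fromBlocks 0 Mᵀ M 0 := by
  ext (i | i) (j | j) <;>
    simp only [submatrix_apply, fromBlocks_apply₁₁, fromBlocks_apply₁₂, fromBlocks_apply₂₁,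
      fromBlocks_apply₂₂, transpose_apply, Matrix.zero_apply, hL, hM,
      finSumFinEquivInterleave_inl_val, finSumFinEquivInterleave_inr_val] <;>
    grind

theorem bidiagonal_doubling_general (n : ℕ) (a b : ℕ → ℝ)
    (M : Matrix (Fin n) (Fin n) ℝ)
    (hM : ∀ i j : Fin n, M i j =
      if (i : ℕ) = j then a i else if (j : ℕ) = (i : ℕ) + 1 then b i else 0)
    (L : Matrix (Fin (2 * n)) (Fin (2 * n)) ℝ)
    (hL : ∀ i j : Fin (2 * n), L i j =
      if (i : ℕ) + 1 = j ∨ (j : ℕ) + 1 = i then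
        (if (min (i : ℕ) (j : ℕ)) % 2 = 0 then a ((min (i : ℕ) (j : ℕ)) / 2)
         else b ((min (i : ℕ) (j : ℕ)) / 2))
      else 0)
    (lam : Fin n → ℝ)
    (hsing : (Mᵀ * M).charpoly = ∏ i, (X - C ((lam i) ^ 2))) :
    L.charpoly = ∏ i, ((X - C (lam i)) * (X + C (lam i))) := by
  rw [← charpoly_reindex (finSumFinEquivInterleave n).symm, reindex_apply, Equiv.symm_symm,
    submatrix_finSumFinEquivInterleave a b M hM L hL, charpoly_fromBlocks_zero₁₁_zero₂₂, hsing,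
    prod_comp]
  refine Finset.prod_congr rfl fun i _ => ?_
  rw [sub_comp, X_comp, C_comp, C_pow]
  ring

/-- Doubling lemma: if `M` is `n × n` bidiagonal with diagonal `a₁,…,aₙ` and
off-diagonal `b₁,…,b_{n-1}`, and `L` is the `2n × 2n` symmetric tridiagonal matrix
with zero diagonal and off-diagonal entries `a₁, b₁, a₂, b₂, …, aₙ`, then the
eigenvalues of `L` are `±λᵢ` where `λᵢ` are the singular values of `M`
(stated via characteristic polynomials). -/
theorem bidiagonal_doubling (n : ℕ) (a b : ℕ → ℝ)
    (M : Matrix (Fin n) (Fin n) ℝ)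
    (hM : ∀ i j : Fin n, M i j =
      if (i : ℕ) = j then a i else if (j : ℕ) = (i : ℕ) + 1 then b i else 0)
    (L : Matrix (Fin (2 * n)) (Fin (2 * n)) ℝ)
    (hL : ∀ i j : Fin (2 * n), L i j =
      if (i : ℕ) + 1 = j ∨ (j : ℕ) + 1 = i then
        (if (min (i : ℕ) (j : ℕ)) % 2 = 0 then a ((min (i : ℕ) (j : ℕ)) / 2)
         else b ((min (i : ℕ) (j : ℕ)) / 2))
      else 0)
    (lam : Fin n → ℝ) (hlam : ∀ i, 0 ≤ lam i)
    (hsing : (Mᵀ * M).charpoly = ∏ i, (X - C ((lam i) ^ 2))) :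
    L.charpoly = ∏ i, ((X - C (lam i)) * (X + C (lam i))) :=
  bidiagonal_doubling_general n a b M hM L hL lam hsing
end

section
/- The map T : (α₁,...,αₙ, θ₁,...,θ_{n-1}) ↦ (x₁,...,xₙ, y₁,...,y_{n-1}) defined by xₖ = cos(αₖ) sin(θₖ) for k = 1,...,n (with the convention θₙ = π/2) and yₖ = sin(α_{k+1}) cos(θₖ) for k = 1,...,n-1, has Jacobian determinant whose absolute value equals (sin²(αₙ)/sin(α₁)) ∏_{k=1}^{n-1} sin²(αₖ) sin²(θₖ), for angles in (0, π/2). -/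
/-!
Write the variables in the interleaved order `α₁, θ₁, α₂, θ₂, …, αₙ` as `z₀, …, z_{2n-2}`
and put `z_{2n-1} = π/2`. Then both families of coordinates of `T` take the single form
`z ↦ cos zᵢ · sin z_{i+1}`, so the Jacobian matrix in these coordinates is upper bidiagonal
with diagonal entries `-sin zᵢ · sin z_{i+1}`. In the product of these, `sin z₀ = sin α₁`
occurs once, `sin z_{2n-1} = 1`, and every other sine occurs twice.
-/

open Real

noncomputable section

def extendByPiDivTwo {N : ℕ} (z : Fin N → ℝ) (j : ℕ) : ℝ :=
  if h : j < N then z ⟨j, h⟩ else π / 2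

def cosMulSinSucc (N : ℕ) (z : Fin N → ℝ) : Fin N → ℝ :=
  fun i => cos (z i) * sin (extendByPiDivTwo z (i + 1))

section

variable {N : ℕ}

theorem differentiable_extendByPiDivTwo (j : ℕ) :
    Differentiable ℝ fun z : Fin N → ℝ => extendByPiDivTwo z j := by
  unfold extendByPiDivTwo
  split_ifs <;> fun_prop

theorem differentiable_cosMulSinSucc : Differentiable ℝ (cosMulSinSucc N) := by
  have := differentiable_extendByPiDivTwo (N := N)
  unfold cosMulSinSucc
  fun_prop

theorem extendByPiDivTwo_update_of_ne (z : Fin N → ℝ) {j : Fin N} {l : ℕ} (h : (j : ℕ) ≠ l)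
    (t : ℝ) : extendByPiDivTwo (Function.update z j t) l = extendByPiDivTwo z l := by
  unfold extendByPiDivTwo
  split_ifs with hl
  · exact Function.update_of_ne (fun hj => h (by rw [← hj])) _ _
  · rfl

theorem fderiv_cosMulSinSucc_single (z : Fin N → ℝ) (i j : Fin N) :
    fderiv ℝ (cosMulSinSucc N) z (Pi.single j 1) i =
      deriv (fun t => cosMulSinSucc N (Function.update z j t) i) (z j) := by
  have h := (differentiable_cosMulSinSucc z).hasFDerivAt.comp_hasDerivAt_of_eq (z j)
    (hasDerivAt_update z j (z j)) (Function.update_eq_self j z).symm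
  exact ((hasDerivAt_pi.mp h) i).deriv.symm

theorem fderiv_cosMulSinSucc_single_of_lt (z : Fin N → ℝ) {i j : Fin N} (hij : j < i) :
    fderiv ℝ (cosMulSinSucc N) z (Pi.single j 1) i = 0 := by
  rw [fderiv_cosMulSinSucc_single]
  have : (fun t => cosMulSinSucc N (Function.update z j t) i) =
      fun _ => cosMulSinSucc N z i := by
    ext t
    simp only [cosMulSinSucc, Function.update_of_ne hij.ne',
      extendByPiDivTwo_update_of_ne z (show (j : ℕ) ≠ i + 1 by omega)]
  rw [this, deriv_const]

theorem fderiv_cosMulSinSucc_single_self (z : Fin N → ℝ) (i : Fin N) :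
    fderiv ℝ (cosMulSinSucc N) z (Pi.single i 1) i =
      -(sin (z i) * sin (extendByPiDivTwo z (i + 1))) := by
  rw [fderiv_cosMulSinSucc_single]
  have : (fun t => cosMulSinSucc N (Function.update z i t) i) =
      fun t => cos t * sin (extendByPiDivTwo z (i + 1)) := by
    ext t
    simp only [cosMulSinSucc, Function.update_self,
      extendByPiDivTwo_update_of_ne z (show (i : ℕ) ≠ i + 1 by omega)]
  rw [this, deriv_mul_const (hasDerivAt_cos _).differentiableAt, deriv_cos', neg_mul]

theorem det_fderiv_cosMulSinSucc (z : Fin N → ℝ) :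
    (fderiv ℝ (cosMulSinSucc N) z).det =
      ∏ i, -(sin (z i) * sin (extendByPiDivTwo z (i + 1))) := by
  rw [ContinuousLinearMap.det, ← LinearMap.det_toMatrix', Matrix.det_of_isUpperTriangular]
  · simp [LinearMap.toMatrix'_apply, fderiv_cosMulSinSucc_single_self]
  · intro i j hij
    simpa [LinearMap.toMatrix'_apply] using fderiv_cosMulSinSucc_single_of_lt z hij

end

def finInterleaveEquiv (m : ℕ) : Fin (m + 1) ⊕ Fin m ≃ Fin (2 * m + 1) :=
  Equiv.ofBijective
    (Sum.elim (fun k => ⟨2 * k, by omega⟩) (fun k => ⟨2 * k + 1, by omega⟩)) <| by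
      refine (Fintype.bijective_iff_injective_and_card _).mpr ⟨?_, by simp; omega⟩
      rintro (k | k) (l | l) h <;> simp [Fin.ext_iff] at h ⊢ <;> omega

def interleaveCLE (m : ℕ) : ((Fin (m + 1) → ℝ) × (Fin m → ℝ)) ≃L[ℝ] (Fin (2 * m + 1) → ℝ) :=
  ((LinearEquiv.sumArrowLequivProdArrow _ _ ℝ ℝ).symm.trans
    (LinearEquiv.funCongrLeft ℝ ℝ (finInterleaveEquiv m).symm)).toContinuousLinearEquiv

def angleMap (m : ℕ) (p : (Fin (m + 1) → ℝ) × (Fin m → ℝ)) :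
    (Fin (m + 1) → ℝ) × (Fin m → ℝ) :=
  (fun k => cos (p.1 k) * sin (if h : (k : ℕ) < m then p.2 ⟨k, h⟩ else π / 2),
   fun k => sin (p.1 k.succ) * cos (p.2 k))

section

variable {m : ℕ}

theorem finInterleaveEquiv_inl (k : Fin (m + 1)) :
    finInterleaveEquiv m (.inl k) = ⟨2 * k, by omega⟩ := rfl

theorem finInterleaveEquiv_inr (k : Fin m) :
    finInterleaveEquiv m (.inr k) = ⟨2 * k + 1, by omega⟩ := rfl

theorem interleaveCLE_apply_finInterleaveEquiv (p : (Fin (m + 1) → ℝ) × (Fin m → ℝ))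
    (x : Fin (m + 1) ⊕ Fin m) :
    interleaveCLE m p (finInterleaveEquiv m x) = Sum.elim p.1 p.2 x := by
  simp only [interleaveCLE, LinearEquiv.coe_toContinuousLinearEquiv', LinearEquiv.trans_apply,
    LinearEquiv.funCongrLeft_apply, LinearMap.funLeft_apply, Equiv.symm_apply_apply]
  rcases x with k | k <;> rfl

theorem extendByPiDivTwo_interleaveCLE_odd (p : (Fin (m + 1) → ℝ) × (Fin m → ℝ))
    (k : Fin (m + 1)) : extendByPiDivTwo (interleaveCLE m p) (2 * k + 1) =
      if h : (k : ℕ) < m then p.2 ⟨k, h⟩ else π / 2 := by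
  by_cases h : (k : ℕ) < m
  · rw [extendByPiDivTwo, dif_pos (by omega), dif_pos h, ← finInterleaveEquiv_inr ⟨k, h⟩,
      interleaveCLE_apply_finInterleaveEquiv, Sum.elim_inr]
  · rw [extendByPiDivTwo, dif_neg (by omega), dif_neg h]

theorem extendByPiDivTwo_interleaveCLE_even (p : (Fin (m + 1) → ℝ) × (Fin m → ℝ))
    (k : Fin m) : extendByPiDivTwo (interleaveCLE m p) (2 * k + 1 + 1) = p.1 k.succ := by
  rw [extendByPiDivTwo, dif_pos (by omega), ← Sum.elim_inl p.1 p.2,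
    ← interleaveCLE_apply_finInterleaveEquiv]
  rfl

theorem angleMap_eq_conj :
    angleMap m = (interleaveCLE m).symm ∘ cosMulSinSucc (2 * m + 1) ∘ interleaveCLE m := by
  funext p
  refine (interleaveCLE m).symm_apply_eq.mpr (funext fun i => ?_) |>.symm
  obtain ⟨x | x, rfl⟩ := (finInterleaveEquiv m).surjective i
  · simp only [Function.comp_apply, cosMulSinSucc, interleaveCLE_apply_finInterleaveEquiv]
    simp only [finInterleaveEquiv_inl, Fin.val_mk, extendByPiDivTwo_interleaveCLE_odd]
    rfl
  · simp only [Function.comp_apply, cosMulSinSucc, interleaveCLE_apply_finInterleaveEquiv]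
    simp only [finInterleaveEquiv_inr, Fin.val_mk, extendByPiDivTwo_interleaveCLE_even]
    exact mul_comm _ _

theorem det_fderiv_angleMap (p : (Fin (m + 1) → ℝ) × (Fin m → ℝ)) :
    (fderiv ℝ (angleMap m) p).det =
      (∏ k, -(sin (p.1 k) * sin (if h : (k : ℕ) < m then p.2 ⟨k, h⟩ else π / 2))) *
        ∏ k, -(sin (p.2 k) * sin (p.1 k.succ)) := by
  rw [angleMap_eq_conj, ContinuousLinearEquiv.comp_fderiv, ContinuousLinearEquiv.comp_right_fderiv]
  refine (LinearMap.det_conj _ (interleaveCLE m).symm.toLinearEquiv).trans ?_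
  rw [← ContinuousLinearMap.det, det_fderiv_cosMulSinSucc, ← (finInterleaveEquiv m).prod_comp,
    Fintype.prod_sum_type]
  simp only [interleaveCLE_apply_finInterleaveEquiv, Sum.elim_inl, Sum.elim_inr]
  simp only [finInterleaveEquiv_inl, finInterleaveEquiv_inr, Fin.val_mk,
    extendByPiDivTwo_interleaveCLE_odd, extendByPiDivTwo_interleaveCLE_even]

theorem abs_det_fderiv_angleMap (α : Fin (m + 1) → ℝ) (θ : Fin m → ℝ) :
    |(fderiv ℝ (angleMap m) (α, θ)).det| =
      |sin (α 0)| * ∏ k, sin (α k.succ) ^ 2 * sin (θ k) ^ 2 := by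
  have hθ : ∏ k : Fin (m + 1), |sin (if h : (k : ℕ) < m then θ ⟨k, h⟩ else π / 2)| =
      ∏ k, |sin (θ k)| := by
    simp [Fin.prod_univ_castSucc]
  rw [det_fderiv_angleMap, abs_mul, Finset.abs_prod, Finset.abs_prod]
  simp only [abs_neg, abs_mul, Finset.prod_mul_distrib, hθ, ← sq_abs (sin _), Finset.prod_pow]
  rw [Fin.prod_univ_succ]
  ring

theorem abs_det_fderiv_angleMap_of_sin_pos (α : Fin (m + 1) → ℝ) (θ : Fin m → ℝ)
    (hα : 0 < sin (α 0)) :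
    |(fderiv ℝ (angleMap m) (α, θ)).det| =
      sin (α (Fin.last m)) ^ 2 / sin (α 0) * ∏ k, sin (α k.castSucc) ^ 2 * sin (θ k) ^ 2 := by
  have hprod : sin (α 0) ^ 2 * ∏ k : Fin m, sin (α k.succ) ^ 2 =
      (∏ k : Fin m, sin (α k.castSucc) ^ 2) * sin (α (Fin.last m)) ^ 2 :=
    (Fin.prod_univ_succ (fun k => sin (α k) ^ 2)).symm.trans (Fin.prod_univ_castSucc _)
  rw [abs_det_fderiv_angleMap, abs_of_pos hα, Finset.prod_mul_distrib, Finset.prod_mul_distrib]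
  field_simp
  linear_combination (∏ k, sin (θ k) ^ 2) * hprod

end

end

/-- The Jacobian of the map `T : (α, θ) ↦ (x, y)` with
`xₖ = cos αₖ sin θₖ` (convention `θₙ = π/2`) and `yₖ = sin α_{k+1} cos θₖ`
has absolute value `(sin²(αₙ)/sin(α₁)) ∏_{k=1}^{n-1} sin²(αₖ) sin²(θₖ)`
for angles in `(0, π/2)`. -/
theorem angle_map_jacobian (n : ℕ) (hn : 1 ≤ n)
    (T : (Fin n → ℝ) × (Fin (n-1) → ℝ) → (Fin n → ℝ) × (Fin (n-1) → ℝ))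
    (hT : T = fun p : (Fin n → ℝ) × (Fin (n-1) → ℝ) =>
      (fun k : Fin n => Real.cos (p.1 k) *
        Real.sin (if h : (k : ℕ) < n - 1 then p.2 ⟨k, h⟩ else Real.pi / 2),
       fun k : Fin (n-1) => Real.sin (p.1 ⟨(k : ℕ) + 1, by have := k.isLt; omega⟩) *
         Real.cos (p.2 k)))
    (α : Fin n → ℝ) (θ : Fin (n-1) → ℝ)
    (hα : ∀ k, α k ∈ Set.Ioo 0 (Real.pi / 2)) :
    |(fderiv ℝ T (α, θ)).det| =
      (Real.sin (α ⟨n - 1, by omega⟩)) ^ 2 / Real.sin (α ⟨0, hn⟩) *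
        ∏ k : Fin (n-1),
          (Real.sin (α ⟨k, by have := k.isLt; omega⟩)) ^ 2 * (Real.sin (θ k)) ^ 2 := by
  obtain ⟨m, rfl⟩ : ∃ m, n = m + 1 := ⟨n - 1, by omega⟩
  subst hT
  exact abs_det_fderiv_angleMap_of_sin_pos α θ <|
    sin_pos_of_pos_of_lt_pi (hα 0).1 ((hα 0).2.trans (by linarith [pi_pos]))
end
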